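/- Let c(p,·) : ℕ → ℚ(q) be defined by c(p,n) = (-1)^{n+1} q^{n(n+3)/2} Σ_{k=0}^{n} (-1)^k q^{k(k+1)p + k(k-1)/2} (q^{2k+1} − 1) (q;q)_n / ((q;q)_{n+k+1} (q;q)_{n-k}). Then c(1, n) = −q^{n+1} c(1, n−1) for all n ≥ 1; equivalently, c(1, n) = (−1)^n q^{n(n+3)/2} for all n ∈ ℕ. -/
import Mathlib


noncomputable section

namespace StmtC

/-- The variable `q` of the field ℚ(q). -/
def q : RatFunc ℚ := RatFunc.X

/-- The q-Pochhammer symbol `(q;q)_m = ∏_{i=1}^{m} (1 - qⁱ)`. -/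
def qq (m : ℕ) : RatFunc ℚ := ∏ i ∈ Finset.range m, (1 - q ^ (i + 1))

/-- Masbaum's formula for the cyclotomic function of the p-th twist knot. -/
def c (p : ℤ) (n : ℕ) : RatFunc ℚ :=
  (-1) ^ (n + 1) * q ^ ((n : ℤ) * ((n : ℤ) + 3) / 2) *
    ∑ k ∈ Finset.range (n + 1),
      (-1) ^ k * q ^ ((k : ℤ) * ((k : ℤ) + 1) * p + (k : ℤ) * ((k : ℤ) - 1) / 2) *
        (q ^ (2 * k + 1) - 1) * qq n / (qq (n + k + 1) * qq (n - k))

end StmtC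

namespace StmtC

lemma hq : q ≠ 0 := RatFunc.X_ne_zero

lemma one_sub_q_pow_ne (m : ℕ) : (1 : RatFunc ℚ) - q ^ (m + 1) ≠ 0 := by
  have h : (1 : RatFunc ℚ) - q ^ (m + 1)
      = algebraMap (Polynomial ℚ) (RatFunc ℚ) (1 - Polynomial.X ^ (m + 1)) := by
    simp [q, RatFunc.algebraMap_X]
  rw [h]
  have hp : (1 - Polynomial.X ^ (m + 1) : Polynomial ℚ) ≠ 0 := by
    intro hcon
    have := congrArg (Polynomial.eval 0) hcon
    simp at this
  exact (map_ne_zero_iff _ (IsFractionRing.injective (Polynomial ℚ) (RatFunc ℚ))).mpr hp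

lemma qq_ne (m : ℕ) : qq m ≠ 0 :=
  Finset.prod_ne_zero_iff.mpr fun i _ => one_sub_q_pow_ne i

lemma qq_succ (m : ℕ) : qq (m + 1) = qq m * (1 - q ^ (m + 1)) :=
  Finset.prod_range_succ _ m

lemma qq_zero : qq 0 = 1 := by simp [qq]

/-- The natural-number exponent `k(3k+1)/2`. -/
def e (k : ℕ) : ℕ := k * (k + 1) + k * (k - 1) / 2

lemma e_succ (k : ℕ) : e (k + 1) = e k + (3 * k + 2) := by
  unfold e
  have h1 : (k + 1) * k = k * (k - 1) + k * 2 := by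
    cases k with
    | zero => rfl
    | succ j => simp [Nat.add_sub_cancel]; ring
  have h2 : (k + 1) * ((k + 1) - 1) / 2 = k * (k - 1) / 2 + k := by
    rw [Nat.add_sub_cancel, h1, Nat.add_mul_div_right _ _ (by norm_num : 0 < 2)]
  rw [h2]
  ring

/-- The `k`-th summand in Masbaum's formula for `p = 1`. -/
def t (n k : ℕ) : RatFunc ℚ :=
  (-1) ^ k * q ^ (e k) * (q ^ (2 * k + 1) - 1) * qq n / (qq (n + k + 1) * qq (n - k))

/-- The WZ certificate term. -/
def g (n k : ℕ) : RatFunc ℚ :=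
  (-1) ^ k * q ^ (e k) * q ^ n * (1 - q ^ k) * qq (n - 1) / (q ^ k * (qq (n + k) * qq (n - k)))

lemma cert (n k : ℕ) (hk : k ≤ n) :
    t (n + 1) k = t n k + (g (n + 1) (k + 1) - g (n + 1) k) := by
  obtain ⟨m, rfl⟩ : ∃ m, n = m + k := ⟨n - k, by omega⟩
  simp only [t, g]
  rw [show m + k + 1 + k + 1 = m + k + k + 1 + 1 from by omega,
      show m + k + 1 + (k + 1) = m + k + k + 1 + 1 from by omega,
      show m + k + 1 - k = m + 1 from by omega,
      show m + k + 1 - (k + 1) = m from by omega,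
      show m + k + 1 - 1 = m + k from by omega,
      show m + k - k = m from by omega,
      show m + k + 1 + k = m + k + k + 1 from by omega,
      qq_succ (m + k), qq_succ (m + k + k + 1), qq_succ m,
      e_succ k, show q ^ (e k + (3 * k + 2)) = q ^ (e k) * q ^ (3 * k + 2) from pow_add q _ _]
  have hP : qq (m + k) ≠ 0 := qq_ne _
  have hQ : qq (m + k + k + 1) ≠ 0 := qq_ne _
  have hR : qq m ≠ 0 := qq_ne _
  have h1 : (1 : RatFunc ℚ) - q ^ (m + k + 1) ≠ 0 := one_sub_q_pow_ne (m + k)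
  have h2 : (1 : RatFunc ℚ) - q ^ (m + k + k + 1 + 1) ≠ 0 := one_sub_q_pow_ne (m + k + k + 1)
  have h3 : (1 : RatFunc ℚ) - q ^ (m + 1) ≠ 0 := one_sub_q_pow_ne m
  have hqk : q ^ k ≠ 0 := pow_ne_zero _ hq
  have hqk1 : q ^ (k + 1) ≠ 0 := pow_ne_zero _ hq
  have hA : (qq (m + k + k + 1) * (1 - q ^ (m + k + k + 1 + 1))) *
      (qq m * (1 - q ^ (m + 1))) ≠ 0 :=
    mul_ne_zero (mul_ne_zero hQ h2) (mul_ne_zero hR h3)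
  have hB : qq (m + k + k + 1) * qq m ≠ 0 := mul_ne_zero hQ hR
  have hC : q ^ (k + 1) * (qq (m + k + k + 1) * (1 - q ^ (m + k + k + 1 + 1)) * qq m) ≠ 0 :=
    mul_ne_zero hqk1 (mul_ne_zero (mul_ne_zero hQ h2) hR)
  have hD : q ^ k * (qq (m + k + k + 1) * (qq m * (1 - q ^ (m + 1)))) ≠ 0 :=
    mul_ne_zero hqk (mul_ne_zero hQ (mul_ne_zero hR h3))
  rw [div_sub_div _ _ hC hD, div_add_div _ _ hB (mul_ne_zero hC hD),
    div_eq_div_iff hA (mul_ne_zero hB (mul_ne_zero hC hD))]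
  ring

lemma boundary (n : ℕ) : g (n + 1) (n + 1) + t (n + 1) (n + 1) = 0 := by
  simp only [t, g]
  rw [show n + 1 - (n + 1) = 0 from by omega,
      show n + 1 - 1 = n from by omega,
      show n + 1 + (n + 1) + 1 = n + n + 1 + 1 + 1 from by omega,
      show n + 1 + (n + 1) = n + n + 1 + 1 from by omega,
      qq_succ (n + n + 1 + 1), qq_succ n, qq_zero]
  have hJ : qq (n + n + 1 + 1) ≠ 0 := qq_ne _
  have h1 : (1 : RatFunc ℚ) - q ^ (n + n + 1 + 1 + 1) ≠ 0 := one_sub_q_pow_ne _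
  have hqn : q ^ (n + 1) ≠ 0 := pow_ne_zero _ hq
  have hE : q ^ (n + 1) * (qq (n + n + 1 + 1) * 1) ≠ 0 :=
    mul_ne_zero hqn (mul_ne_zero hJ one_ne_zero)
  have hF : qq (n + n + 1 + 1) * (1 - q ^ (n + n + 1 + 1 + 1)) * 1 ≠ 0 :=
    mul_ne_zero (mul_ne_zero hJ h1) one_ne_zero
  rw [div_add_div _ _ hE hF, div_eq_zero_iff]
  left
  ring

lemma sum_t : ∀ n : ℕ, ∑ k ∈ Finset.range (n + 1), t n k = -1 := by
  intro n
  induction n with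
  | zero =>
    rw [Finset.sum_range_one]
    simp only [t, e]
    norm_num
    rw [qq_zero, qq_succ 0, qq_zero, pow_one, mul_one, mul_one, one_mul,
      div_eq_iff (by simpa using one_sub_q_pow_ne 0 : (1 : RatFunc ℚ) - q ≠ 0)]
    ring
  | succ n ih =>
    rw [Finset.sum_range_succ,
        Finset.sum_congr rfl (fun k hk => cert n k (Nat.lt_succ_iff.mp (Finset.mem_range.mp hk))),
        Finset.sum_add_distrib, ih, Finset.sum_range_sub (g (n + 1))]
    have hg0 : g (n + 1) 0 = 0 := by simp [g]
    rw [hg0, sub_zero]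
    linear_combination boundary n

lemma zpow_e (k : ℕ) :
    q ^ ((k : ℤ) * ((k : ℤ) + 1) * 1 + (k : ℤ) * ((k : ℤ) - 1) / 2) = q ^ (e k) := by
  have key : ((k : ℤ) * ((k : ℤ) - 1)) / 2 = ((k * (k - 1) / 2 : ℕ) : ℤ) := by
    cases k with
    | zero => simp
    | succ j =>
      have h2 : 2 ∣ (j + 1) * j := by
        rcases Nat.even_or_odd j with h | h
        · exact Dvd.dvd.mul_left h.two_dvd _
        · exact Dvd.dvd.mul_right (Nat.even_add_one.mpr (Nat.not_even_iff_odd.mpr h)).two_dvd _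
      obtain ⟨d, hd⟩ := h2
      have h3 : ((j + 1 : ℕ) : ℤ) * (((j + 1 : ℕ) : ℤ) - 1) = (((j + 1) * j : ℕ) : ℤ) := by
        push_cast; ring
      rw [h3, show (j + 1) * ((j + 1) - 1) = (j + 1) * j from rfl, hd]
      push_cast
      ring
  rw [mul_one, key, show (k : ℤ) * ((k : ℤ) + 1) = ((k * (k + 1) : ℕ) : ℤ) by push_cast; ring,
    ← Nat.cast_add, zpow_natCast]
  rfl

lemma c_one_eq (n : ℕ) : c 1 n = (-1) ^ n * q ^ ((n : ℤ) * ((n : ℤ) + 3) / 2) := by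
  unfold c
  rw [Finset.sum_congr rfl (fun k _ => by rw [zpow_e k]; rfl :
        ∀ k ∈ Finset.range (n + 1),
          (-1) ^ k * q ^ ((k : ℤ) * ((k : ℤ) + 1) * 1 + (k : ℤ) * ((k : ℤ) - 1) / 2) *
              (q ^ (2 * k + 1) - 1) * qq n / (qq (n + k + 1) * qq (n - k)) = t n k),
      sum_t n, pow_succ]
  ring

theorem cyclotomic_trefoil :
    (∀ n : ℕ, 1 ≤ n → c 1 n = -q ^ (n + 1) * c 1 (n - 1)) ∧
    (∀ n : ℕ, c 1 n = (-1) ^ n * q ^ ((n : ℤ) * ((n : ℤ) + 3) / 2)) := by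
  refine ⟨?_, c_one_eq⟩
  intro n hn
  obtain ⟨m, rfl⟩ : ∃ m, n = m + 1 := ⟨n - 1, by omega⟩
  rw [c_one_eq, Nat.add_sub_cancel, c_one_eq]
  have h2 : (2 : ℤ) ∣ (m : ℤ) * ((m : ℤ) + 3) := by
    have h := Int.even_mul_succ_self (m : ℤ)
    have h3 : (m : ℤ) * ((m : ℤ) + 3) = (m : ℤ) * ((m : ℤ) + 1) + 2 * (m : ℤ) := by ring
    rw [h3]
    exact dvd_add h.two_dvd ⟨m, rfl⟩
  obtain ⟨d, hd⟩ := h2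
  have hz : ((m + 1 : ℕ) : ℤ) * (((m + 1 : ℕ) : ℤ) + 3) / 2
      = (m : ℤ) * ((m : ℤ) + 3) / 2 + ((m : ℤ) + 2) := by
    push_cast
    have e1 : ((m : ℤ) + 1) * ((m : ℤ) + 1 + 3) = 2 * (d + (m : ℤ) + 2) := by
      linear_combination hd
    rw [e1, hd, Int.mul_ediv_cancel_left _ two_ne_zero, Int.mul_ediv_cancel_left _ two_ne_zero]
    ring
  rw [hz, zpow_add₀ hq, show ((m : ℤ) + 2) = ((m + 2 : ℕ) : ℤ) by push_cast; ring, zpow_natCast,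
    pow_succ]
  ring

end StmtC
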